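/- In the Laver table of order 2^n with operation ⋆ₙ on {1,...,2^n}, for every p the sequence q ↦ p ⋆ₙ q is periodic with period π(p) dividing 2^n, π(p) is a power of 2, and the sequence p ⋆ₙ 1, p ⋆ₙ 2, ..., p ⋆ₙ π(p) is strictly increasing from p+1 mod 2^n to 2^n. -/

import Mathlib

/-!
Left distributivity together with `q ⋆ 1 = q + 1` gives the row recursion
`p ⋆ (q + 1) = (p ⋆ q) ⋆ (p ⋆ 1)`. A downward induction on `p` shows `p < p ⋆ q` whenever
`p < N`, so by the recursion each row increases strictly until it first takes the value `N`,
at some column `r`. As the row of `N` is the identity, the recursion restarts the row at column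
`r + 1`, so `r` is a period. Since `p ⋆ N = N`, the value `N` recurs at column `N`, which
forces `r ∣ N`; for `N = 2 ^ n` this makes `r` a power of two.
-/

def LaverAxioms (N : ℕ) (star : ℕ → ℕ → ℕ) : Prop :=
  (∀ p q, p ∈ Set.Icc 1 N → q ∈ Set.Icc 1 N → star p q ∈ Set.Icc 1 N) ∧
  (∀ p ∈ Set.Icc 1 N, star p 1 = p % N + 1) ∧
  (∀ p q, p ∈ Set.Icc 1 N → q ∈ Set.Icc 1 N →
    star p (star q 1) = star (star p q) (star p 1))

namespace LaverAxioms

variable {N : ℕ} {star : ℕ → ℕ → ℕ}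

lemma star_one_of_lt (h : LaverAxioms N star) {p : ℕ} (hp : 1 ≤ p) (hpN : p < N) :
    star p 1 = p + 1 := by
  rw [h.2.1 p ⟨hp, hpN.le⟩, Nat.mod_eq_of_lt hpN]

lemma top_star_one (h : LaverAxioms N star) (hN : 1 ≤ N) : star N 1 = 1 := by
  rw [h.2.1 N ⟨hN, le_rfl⟩, Nat.mod_self]

lemma star_succ (h : LaverAxioms N star) {p q : ℕ} (hp : p ∈ Set.Icc 1 N) (hq : 1 ≤ q)
    (hqN : q < N) : star p (q + 1) = star (star p q) (star p 1) := by
  rw [← h.2.2 p q hp ⟨hq, hqN.le⟩, h.star_one_of_lt hq hqN]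

lemma top_star (h : LaverAxioms N star) {q : ℕ} (hq : q ∈ Set.Icc 1 N) : star N q = q := by
  obtain ⟨hq, hqN⟩ := hq
  have hN : 1 ≤ N := hq.trans hqN
  induction q, hq using Nat.le_induction with
  | base => exact h.top_star_one hN
  | succ q hq ih =>
    rw [h.star_succ ⟨hN, le_rfl⟩ hq (by omega), ih (by omega), h.top_star_one hN,
      h.star_one_of_lt hq (by omega)]

lemma lt_star (h : LaverAxioms N star) {p q : ℕ} (hp : 1 ≤ p) (hpN : p < N)
    (hq : q ∈ Set.Icc 1 N) : p < star p q := by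
  obtain ⟨hq, hqN⟩ := hq
  induction q, hq using Nat.le_induction with
  | base => rw [h.star_one_of_lt hp hpN]; omega
  | succ q hq ih =>
    have hx : star p q ∈ Set.Icc 1 N := h.1 p q ⟨hp, hpN.le⟩ ⟨hq, by omega⟩
    have hpx : p < star p q := ih (by omega)
    rw [h.star_succ ⟨hp, hpN.le⟩ hq (by omega), h.star_one_of_lt hp hpN]
    rcases hx.2.eq_or_lt with hxN | hxN
    · rw [hxN, h.top_star ⟨by omega, by omega⟩]; omega
    · exact hpx.trans (h.lt_star hx.1 hxN ⟨by omega, by omega⟩)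
termination_by N - p

lemma star_top (h : LaverAxioms N star) {p : ℕ} (hp : p ∈ Set.Icc 1 N) : star p N = N := by
  have hN : 1 ≤ N := hp.1.trans hp.2
  rcases hp.2.eq_or_lt with rfl | hpN
  · exact h.top_star hp
  have hx : star p N ∈ Set.Icc 1 N := h.1 p N hp ⟨hN, le_rfl⟩
  have hpx : p < star p N := h.lt_star hp.1 hpN ⟨hN, le_rfl⟩
  -- The axiom at `q = N` reads `p + 1 = (p ⋆ N) ⋆ (p + 1)`, impossible if `p ⋆ N < N`.
  have hfix := h.2.2 p N hp ⟨hN, le_rfl⟩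
  rw [h.top_star_one hN, h.star_one_of_lt hp.1 hpN] at hfix
  by_contra hne
  have := h.lt_star hx.1 (lt_of_le_of_ne hx.2 hne) (q := p + 1) ⟨by omega, by omega⟩
  omega

lemma star_lt_star_succ (h : LaverAxioms N star) {p q : ℕ} (hp : p ∈ Set.Icc 1 N)
    (hq : 1 ≤ q) (hqN : q < N) (hne : star p q ≠ N) : star p q < star p (q + 1) := by
  have hx : star p q ∈ Set.Icc 1 N := h.1 p q hp ⟨hq, hqN.le⟩
  rw [h.star_succ hp hq hqN]
  exact h.lt_star hx.1 (lt_of_le_of_ne hx.2 hne) (h.1 p 1 hp ⟨le_rfl, hq.trans hqN.le⟩)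

lemma star_add_of_star_eq_top (h : LaverAxioms N star) {p r q : ℕ} (hp : p ∈ Set.Icc 1 N)
    (hr : 1 ≤ r) (hpr : star p r = N) (hq : 1 ≤ q) (hqr : q + r ≤ N) :
    star p (q + r) = star p q := by
  induction q, hq using Nat.le_induction with
  | base =>
    rw [add_comm, h.star_succ hp hr (by omega), hpr,
      h.top_star (h.1 p 1 hp ⟨le_rfl, by omega⟩)]
  | succ q hq ih =>
    rw [add_right_comm, h.star_succ hp (by omega) (by omega), ih (by omega),
      ← h.star_succ hp hq (by omega)]

lemma star_add_mul_of_star_eq_top (h : LaverAxioms N star) {p r q : ℕ} (hp : p ∈ Set.Icc 1 N)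
    (hr : 1 ≤ r) (hpr : star p r = N) (hq : 1 ≤ q) (j : ℕ) (hqj : q + j * r ≤ N) :
    star p (q + j * r) = star p q := by
  induction j with
  | zero => simp
  | succ j ih =>
    have hjr : q + j * r + r ≤ N := by rwa [add_assoc, ← Nat.succ_mul]
    rw [Nat.succ_mul, ← add_assoc, h.star_add_of_star_eq_top hp hr hpr (by omega) hjr,
      ih (by omega)]

lemma dvd_of_star_eq_top (h : LaverAxioms N star) {p r : ℕ} (hp : p ∈ Set.Icc 1 N)
    (hr : 1 ≤ r) (hpr : star p r = N) (hmin : ∀ q, 1 ≤ q → q < r → star p q ≠ N) :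
    r ∣ N := by
  refine Nat.dvd_of_mod_eq_zero (Nat.eq_zero_of_not_pos fun hmod => ?_)
  have hrec := h.star_add_mul_of_star_eq_top hp hr hpr hmod (N / r) (Nat.mod_add_div' N r).le
  rw [Nat.mod_add_div', h.star_top hp] at hrec
  exact hmin _ hmod (Nat.mod_lt N hr) hrec.symm

end LaverAxioms

/-- in the Laver table of order 2^n, each row q ↦ p ⋆ₙ q is periodic with
period π(p) = 2^k a power of 2 dividing 2^n (k ≤ n); π(p) is the smallest such period;
the first π(p) values are strictly increasing, ending with p ⋆ₙ π(p) = 2^n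
(and starting from p ⋆ₙ 1 = p+1 mod 2^n, which is the first axiom). -/
theorem laver_period (n : ℕ) (star : ℕ → ℕ → ℕ) (h : LaverAxioms (2 ^ n) star) :
    ∀ p ∈ Set.Icc 1 (2 ^ n), ∃ k ≤ n,
      (∀ q, 1 ≤ q → q + 2 ^ k ≤ 2 ^ n → star p (q + 2 ^ k) = star p q) ∧
      (∀ m, 0 < m → m < 2 ^ k →
        ∃ q, 1 ≤ q ∧ q + m ≤ 2 ^ n ∧ star p (q + m) ≠ star p q) ∧
      (∀ q, 1 ≤ q → q + 1 ≤ 2 ^ k → star p q < star p (q + 1)) ∧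
      star p (2 ^ k) = 2 ^ n := by
  intro p hp
  classical
  have hex : ∃ r, 1 ≤ r ∧ star p r = 2 ^ n := ⟨2 ^ n, Nat.one_le_two_pow, h.star_top hp⟩
  obtain ⟨r, ⟨hr, hpr⟩, hmin⟩ : ∃ r, (1 ≤ r ∧ star p r = 2 ^ n) ∧
      ∀ q, 1 ≤ q → q < r → star p q ≠ 2 ^ n :=
    ⟨Nat.find hex, Nat.find_spec hex, fun q hq hqr hpq => Nat.find_min hex hqr ⟨hq, hpq⟩⟩
  obtain ⟨k, hkn, rfl⟩ :=
    (Nat.dvd_prime_pow Nat.prime_two).mp (h.dvd_of_star_eq_top hp hr hpr hmin)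
  have hkN : 2 ^ k ≤ 2 ^ n := Nat.pow_le_pow_right two_pos hkn
  refine ⟨k, hkn, fun q hq hqN => h.star_add_of_star_eq_top hp hr hpr hq hqN,
    fun m hm hmk => ⟨2 ^ k - m, by omega, by omega, ?_⟩,
    fun q hq hqk => h.star_lt_star_succ hp hq (by omega) (hmin q hq (by omega)), hpr⟩
  rw [Nat.sub_add_cancel hmk.le, hpr]
  exact (hmin _ (by omega) (by omega)).symm
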